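/- arXiv:1506.06198 — 2 statements merged into one kernel-verified Lean document; each statement's English description precedes it below -/
import Mathlib

section
/- For each i ∈ {2,3,4} and every matrix (a,b;c,d) ∈ SL_2(ℤ) with a ≡ d ≡ 1 (mod 2) and b ≡ c ≡ 0 (mod 2) (i.e. every element of the principal congruence subgroup Γ(2)), for all τ in the complex upper half-plane ℍ and all z ∈ ℂ one has ϑ_i((aτ+b)/(cτ+d), z/(cτ+d))² / ϑ_i((aτ+b)/(cτ+d), 0)² · exp(−2πi·c·z²/(cτ+d)) = ϑ_i(τ,z)²/ϑ_i(τ,0)². That is, ϑ_i(τ,z)²/ϑ_i(τ,0)² satisfies the modular transformation law of a Jacobi form of weight 0 and index 1 for Γ(2). -/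
noncomputable section

open Complex

/-- `2πi`. -/
def twoPiI : ℂ := 2 * Real.pi * Complex.I

/-- `q = e^{2πiτ}`. -/
def qq (τ : ℂ) : ℂ := Complex.exp (twoPiI * τ)

/-- `y = e^{2πiz}`. -/
def yy (z : ℂ) : ℂ := Complex.exp (twoPiI * z)

/-- Jacobi theta function `ϑ₁`. -/
def th1 (τ z : ℂ) : ℂ :=
  -Complex.I * ∑' n : ℤ, (-1 : ℂ) ^ n *
    Complex.exp (twoPiI * (((n : ℂ) + 1/2) * z + ((n : ℂ) + 1/2) ^ 2 / 2 * τ))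

/-- Jacobi theta function `ϑ₂`. -/
def th2 (τ z : ℂ) : ℂ :=
  ∑' n : ℤ, Complex.exp (twoPiI * (((n : ℂ) + 1/2) * z + ((n : ℂ) + 1/2) ^ 2 / 2 * τ))

/-- Jacobi theta function `ϑ₃`. -/
def th3 (τ z : ℂ) : ℂ :=
  ∑' n : ℤ, Complex.exp (twoPiI * ((n : ℂ) * z + (n : ℂ) ^ 2 / 2 * τ))

/-- Jacobi theta function `ϑ₄`. -/
def th4 (τ z : ℂ) : ℂ :=
  ∑' n : ℤ, (-1 : ℂ) ^ n * Complex.exp (twoPiI * ((n : ℂ) * z + (n : ℂ) ^ 2 / 2 * τ))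

/-- The Dedekind eta function `η(τ) = q^{1/24} ∏_{n≥1} (1 - qⁿ)`. -/
def etaF (τ : ℂ) : ℂ :=
  Complex.exp (twoPiI * τ / 24) * ∏' n : ℕ, (1 - qq τ ^ (n + 1))

/-- The quasimodular Eisenstein series `E₂(τ) = 1 - 24 ∑_{n≥1} σ₁(n) qⁿ`. -/
def E2 (τ : ℂ) : ℂ :=
  1 - 24 * ∑' n : ℕ, (∑ d ∈ Nat.divisors (n + 1), (d : ℂ)) * qq τ ^ (n + 1)

/-- `Λ_N(τ) = (N/24)(N E₂(Nτ) - E₂(τ))`. -/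
def Lam (N : ℕ) (τ : ℂ) : ℂ := (N : ℂ) / 24 * ((N : ℂ) * E2 ((N : ℂ) * τ) - E2 τ)

/-- The weak Jacobi form `φ_{0,1}`. -/
def phi01 (τ z : ℂ) : ℂ :=
  4 * (th2 τ z ^ 2 / th2 τ 0 ^ 2 + th3 τ z ^ 2 / th3 τ 0 ^ 2 + th4 τ z ^ 2 / th4 τ 0 ^ 2)

/-- The weak Jacobi form `φ_{-2,1}`. -/
def phim21 (τ z : ℂ) : ℂ := -(th1 τ z ^ 2) / etaF τ ^ 6

/-!
Write `ϑ₂, ϑ₃, ϑ₄` as theta functions `ϑ_{x,y}` with characteristics `(x, y) = (1,0), (0,0), (0,1)`.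
In the squared quotient `ϑ_{x,y}(τ,z)² / ϑ_{x,y}(τ,0)²` every constant of the transformation laws
(eighth roots of unity, `√(-iτ)`) cancels; the quotient only depends on `(x, y)` mod 2, and under
`T` and `S` it obeys the weight 0, index 1 Jacobi law up to moving the characteristic. The
characteristics mod 2 carry a right action of `SL(2, ℤ)` compatible with the slash action, so
since `S` and `T` generate `SL(2, ℤ)` the law holds for every `γ`, and `Γ(2)` acts trivially on
characteristics mod 2.
-/

open scoped Real MatrixGroups

lemma jacobiTheta₂_add_int_left (k : ℤ) (z τ : ℂ) : jacobiTheta₂ (z + k) τ = jacobiTheta₂ z τ := by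
  simpa using (show Function.Periodic (jacobiTheta₂ · τ) 1 from
    fun z ↦ jacobiTheta₂_add_left z τ).int_mul k z

lemma jacobiTheta₂_add_int_mul_left (k : ℤ) (z τ : ℂ) :
    jacobiTheta₂ (z + k * τ) τ = cexp (-π * I * (k ^ 2 * τ + 2 * k * z)) * jacobiTheta₂ z τ := by
  conv_rhs => rw [jacobiTheta₂, ← tsum_mul_left, ← (Equiv.addRight k).tsum_eq]
  refine tsum_congr fun n ↦ ?_
  simp_rw [jacobiTheta₂_term, Equiv.coe_addRight, ← Complex.exp_add, Int.cast_add]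
  ring_nf

lemma jacobiTheta₂_add_one_right (z τ : ℂ) :
    jacobiTheta₂ z (τ + 1) = jacobiTheta₂ (z + 1 / 2) τ := by
  refine tsum_congr fun n ↦ ?_
  obtain ⟨m, hm⟩ : Even (n * (n - 1)) := Int.even_mul_pred_self n
  have hmC : (n : ℂ) ^ 2 - n = 2 * m := by
    rw [← two_mul] at hm; exact_mod_cast (by linear_combination hm : n ^ 2 - n = 2 * m)
  rw [jacobiTheta₂_term, jacobiTheta₂_term,
    show 2 * π * I * n * z + π * I * n ^ 2 * (τ + 1)
      = m * (2 * π * I) + (2 * π * I * n * (z + 1 / 2) + π * I * n ^ 2 * τ) by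
        linear_combination (π * I) * hmC,
    Complex.exp_add, Complex.exp_int_mul_two_pi_mul_I, one_mul]

-- `ϑ_{x,y}(τ,z) = ∑ₙ exp(πi (n + x/2)² τ + 2πi (n + x/2)(z + y/2))`.
def thetaChar (x y : ℤ) (τ z : ℂ) : ℂ :=
  cexp (π * I * (x ^ 2 * τ / 4 + x * z + x * y / 2)) * jacobiTheta₂ (z + y / 2 + x * τ / 2) τ

-- For `(x, y) ≡ (1, 1)` the denominator vanishes (it is `ϑ₁(τ,0)²` up to a constant), so the
-- quotient is the junk value `0`; the transformation laws below hold for it all the same.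
def thetaRatio (x y : ℤ) (τ z : ℂ) : ℂ := thetaChar x y τ z ^ 2 / thetaChar x y τ 0 ^ 2

lemma th2_eq_thetaChar (τ z : ℂ) : th2 τ z = thetaChar 1 0 τ z := by
  rw [th2, thetaChar, jacobiTheta₂, ← tsum_mul_left]
  refine tsum_congr fun n ↦ ?_
  rw [jacobiTheta₂_term, ← Complex.exp_add, twoPiI]
  congr 1
  push_cast
  ring

lemma th3_eq_thetaChar (τ z : ℂ) : th3 τ z = thetaChar 0 0 τ z := by
  rw [th3, thetaChar, jacobiTheta₂, ← tsum_mul_left]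
  refine tsum_congr fun n ↦ ?_
  rw [jacobiTheta₂_term, ← Complex.exp_add, twoPiI]
  congr 1
  push_cast
  ring

lemma th4_eq_thetaChar (τ z : ℂ) : th4 τ z = thetaChar 0 1 τ z := by
  rw [th4, thetaChar, jacobiTheta₂, ← tsum_mul_left]
  refine tsum_congr fun n ↦ ?_
  rw [jacobiTheta₂_term, ← Complex.exp_pi_mul_I, ← Complex.exp_int_mul, ← Complex.exp_add,
    ← Complex.exp_add, twoPiI]
  congr 1
  push_cast
  ring

lemma thetaChar_add_two_mul_left (k x y : ℤ) (τ z : ℂ) :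
    thetaChar (x + 2 * k) y τ z = thetaChar x y τ z := by
  rw [thetaChar, thetaChar,
    show z + y / 2 + ((x + 2 * k : ℤ) : ℂ) * τ / 2 = (z + y / 2 + x * τ / 2) + k * τ by
      push_cast; ring,
    jacobiTheta₂_add_int_mul_left, ← mul_assoc, ← Complex.exp_add]
  congr 2
  push_cast
  ring

lemma thetaChar_add_two_mul_right (k x y : ℤ) (τ z : ℂ) :
    thetaChar x (y + 2 * k) τ z = cexp (π * I * x * k) * thetaChar x y τ z := by
  rw [thetaChar, thetaChar,
    show z + ((y + 2 * k : ℤ) : ℂ) / 2 + x * τ / 2 = (z + y / 2 + x * τ / 2) + k by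
      push_cast; ring,
    jacobiTheta₂_add_int_left, ← mul_assoc, ← Complex.exp_add]
  congr 2
  push_cast
  ring

lemma thetaChar_add_one (x y : ℤ) (τ z : ℂ) :
    thetaChar x y (τ + 1) z =
      cexp (-π * I * (x ^ 2 + 2 * x) / 4) * thetaChar x (x + y + 1) τ z := by
  rw [thetaChar, thetaChar, jacobiTheta₂_add_one_right,
    show z + y / 2 + x * (τ + 1) / 2 + 1 / 2 = z + ((x + y + 1 : ℤ) : ℂ) / 2 + x * τ / 2 by
      push_cast; ring,
    ← mul_assoc, ← Complex.exp_add]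
  congr 2
  push_cast
  ring

lemma jacobiTheta₂_div_neg_one_div {τ : ℂ} (hτ : τ ≠ 0) (z : ℂ) :
    jacobiTheta₂ (z / τ) (-1 / τ) =
      (-I * τ) ^ (1 / 2 : ℂ) * cexp (π * I * z ^ 2 / τ) * jacobiTheta₂ z τ := by
  have hroot : (-I * τ) ^ (1 / 2 : ℂ) ≠ 0 := by simp [Complex.cpow_eq_zero_iff, hτ]
  have hexp : cexp (π * I * z ^ 2 / τ) * cexp (-π * I * z ^ 2 / τ) = 1 := by
    rw [← Complex.exp_add, ← Complex.exp_zero]; ring_nf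
  calc jacobiTheta₂ (z / τ) (-1 / τ)
      = ((-I * τ) ^ (1 / 2 : ℂ) * (1 / (-I * τ) ^ (1 / 2 : ℂ))) *
          (cexp (π * I * z ^ 2 / τ) * cexp (-π * I * z ^ 2 / τ)) *
          jacobiTheta₂ (z / τ) (-1 / τ) := by
        rw [mul_one_div_cancel hroot, hexp, one_mul, one_mul]
    _ = _ := by rw [jacobiTheta₂_functional_equation z τ]; ring

lemma thetaChar_neg_one_div {τ : ℂ} (hτ : τ ≠ 0) (x y : ℤ) (z : ℂ) :
    thetaChar x y (-1 / τ) (z / τ) =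
      (-I * τ) ^ (1 / 2 : ℂ) * cexp (π * I * x * y / 2) * cexp (π * I * z ^ 2 / τ) *
        thetaChar y (-x) τ z := by
  set w := z + y * τ / 2 - x / 2 with hw_def
  have hw : z / τ + y / 2 + x * (-1 / τ) / 2 = w / τ := by field_simp; ring
  have hexp : cexp (π * I * (x ^ 2 * (-1 / τ) / 4 + x * (z / τ) + x * y / 2)) *
      cexp (π * I * w ^ 2 / τ) = cexp (π * I * x * y / 2) * cexp (π * I * z ^ 2 / τ) *
        cexp (π * I * (y ^ 2 * τ / 4 + y * z + y * ((-x : ℤ) : ℂ) / 2)) := by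
    simp only [← Complex.exp_add, hw_def]
    congr 1
    field_simp
    push_cast
    ring
  rw [thetaChar, thetaChar, hw, jacobiTheta₂_div_neg_one_div hτ,
    show z + ((-x : ℤ) : ℂ) / 2 + y * τ / 2 = w by push_cast; ring]
  linear_combination ((-I * τ) ^ (1 / 2 : ℂ) * jacobiTheta₂ w τ) * hexp

lemma thetaRatio_eq_of_thetaChar_eq_const_mul {x y x' y' : ℤ} {τ τ' : ℂ} {C : ℂ} (hC : C ≠ 0)
    (h : ∀ z, thetaChar x y τ z = C * thetaChar x' y' τ' z) (z : ℂ) :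
    thetaRatio x y τ z = thetaRatio x' y' τ' z := by
  rw [thetaRatio, thetaRatio, h, h, mul_pow, mul_pow, mul_div_mul_left _ _ (pow_ne_zero 2 hC)]

lemma thetaRatio_congr {x y x' y' : ℤ} (hx : x ≡ x' [ZMOD 2]) (hy : y ≡ y' [ZMOD 2])
    (τ z : ℂ) : thetaRatio x y τ z = thetaRatio x' y' τ z := by
  obtain ⟨k, rfl⟩ : ∃ k, x' = x + 2 * k := ⟨(x' - x) / 2, by have := hx.dvd; omega⟩
  obtain ⟨m, rfl⟩ : ∃ m, y' = y + 2 * m := ⟨(y' - y) / 2, by have := hy.dvd; omega⟩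
  refine (thetaRatio_eq_of_thetaChar_eq_const_mul (C := cexp (π * I * x * m))
    (Complex.exp_ne_zero _) (fun z ↦ ?_) z).symm
  rw [thetaChar_add_two_mul_left, thetaChar_add_two_mul_right]

lemma thetaRatio_add_one (x y : ℤ) (τ z : ℂ) :
    thetaRatio x y (τ + 1) z = thetaRatio x (x + y + 1) τ z :=
  thetaRatio_eq_of_thetaChar_eq_const_mul (Complex.exp_ne_zero _) (thetaChar_add_one x y τ) z

lemma thetaRatio_neg_one_div {τ : ℂ} (hτ : τ ≠ 0) (x y : ℤ) (z : ℂ) :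
    thetaRatio x y (-1 / τ) (z / τ) * cexp (-twoPiI * z ^ 2 / τ) = thetaRatio y (-x) τ z := by
  have hC : (-I * τ) ^ (1 / 2 : ℂ) * cexp (π * I * x * y / 2) ≠ 0 :=
    mul_ne_zero (by simp [Complex.cpow_eq_zero_iff, hτ]) (Complex.exp_ne_zero _)
  have h0 := thetaChar_neg_one_div hτ x y 0
  simp only [zero_div, ne_eq, OfNat.ofNat_ne_zero, not_false_eq_true, zero_pow, mul_zero,
    Complex.exp_zero, mul_one] at h0
  have hexp : cexp (π * I * z ^ 2 / τ) ^ 2 * cexp (-twoPiI * z ^ 2 / τ) = 1 := by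
    rw [← Complex.exp_nat_mul, ← Complex.exp_add, twoPiI, ← Complex.exp_zero]
    ring_nf
  rw [thetaRatio, thetaRatio, thetaChar_neg_one_div hτ, h0, mul_assoc _ (cexp _), mul_pow,
    mul_pow _ (thetaChar _ _ _ 0), mul_div_mul_left _ _ (pow_ne_zero 2 hC), mul_pow]
  linear_combination (thetaChar y (-x) τ z ^ 2 / thetaChar y (-x) τ 0 ^ 2) * hexp

open UpperHalfPlane ModularGroup CongruenceSubgroup

lemma coe_SL2Z_smul (g : SL(2, ℤ)) (τ : ℍ) :
    ((g • τ : ℍ) : ℂ) = (g 0 0 * τ + g 0 1) / denom g τ := by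
  rw [coe_specialLinearGroup_apply, denom_apply]
  simp

lemma denom_SL2Z_mul (g h : SL(2, ℤ)) (τ : ℍ) :
    denom (g * h) τ = denom g (h • τ : ℍ) * denom h τ := by
  rw [denom_cocycle _ _ τ.im_ne_zero, sl_moeb, coe_smul_of_det_pos (by simp)]

lemma SL2Z_mul_one_zero_mul_denom (g h : SL(2, ℤ)) (τ : ℍ) :
    ((g * h) 1 0 : ℂ) * denom h τ = g 1 0 + h 1 0 * (denom g (h • τ : ℍ) * denom h τ) := by
  have hdet : (h 0 0 * h 1 1 - h 0 1 * h 1 0 : ℂ) = 1 := by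
    exact_mod_cast (Matrix.det_fin_two h.1).symm.trans h.2
  have hh := denom_ne_zero h τ
  rw [denom_apply] at hh
  rw [denom_apply, denom_apply, coe_SL2Z_smul, denom_apply]
  simp only [Matrix.SpecialLinearGroup.coe_mul, Matrix.mul_apply, Fin.sum_univ_two]
  field_simp
  push_cast
  linear_combination (g 1 0 : ℂ) * hdet

-- The slash operator of weight 0 and index 1.
def jacobiSlash (γ : SL(2, ℤ)) (φ : ℍ → ℂ → ℂ) (τ : ℍ) (z : ℂ) : ℂ :=
  φ (γ • τ) (z / denom γ τ) * cexp (-twoPiI * γ 1 0 * z ^ 2 / denom γ τ)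

@[simp]
lemma jacobiSlash_one (φ : ℍ → ℂ → ℂ) : jacobiSlash 1 φ = φ := by
  ext τ z
  simp [jacobiSlash]

lemma jacobiSlash_mul (g h : SL(2, ℤ)) (φ : ℍ → ℂ → ℂ) :
    jacobiSlash (g * h) φ = jacobiSlash h (jacobiSlash g φ) := by
  ext τ z
  have hg := denom_ne_zero g (h • τ)
  have hh := denom_ne_zero h τ
  have key := SL2Z_mul_one_zero_mul_denom g h τ
  simp only [jacobiSlash, mul_smul, map_mul, denom_SL2Z_mul, div_div, mul_assoc, ← Complex.exp_add]
  rw [mul_comm (denom h τ)]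
  congr 2
  field_simp
  linear_combination (-twoPiI * z ^ 2) * key

-- How `γ = (a b; c d)` moves a theta characteristic: `ϑ_{x,y} ∣ γ` is, up to constants,
-- `ϑ_{ax+cy+ac, bx+dy+bd}`.
def thetaCharAction (γ : SL(2, ℤ)) (p : ZMod 2 × ZMod 2) : ZMod 2 × ZMod 2 :=
  ((γ 0 0 : ZMod 2) * p.1 + (γ 1 0 : ZMod 2) * p.2 + (γ 0 0 : ZMod 2) * (γ 1 0 : ZMod 2),
    (γ 0 1 : ZMod 2) * p.1 + (γ 1 1 : ZMod 2) * p.2 + (γ 0 1 : ZMod 2) * (γ 1 1 : ZMod 2))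

@[simp]
lemma thetaCharAction_one (p : ZMod 2 × ZMod 2) : thetaCharAction 1 p = p := by
  simp [thetaCharAction]

lemma thetaCharAction_mul (g h : SL(2, ℤ)) (p : ZMod 2 × ZMod 2) :
    thetaCharAction (g * h) p = thetaCharAction h (thetaCharAction g p) := by
  have hg := congrArg (Int.cast : ℤ → ZMod 2) ((Matrix.det_fin_two g.1).symm.trans g.2)
  push_cast at hg
  simp only [thetaCharAction, Matrix.SpecialLinearGroup.coe_mul, Matrix.mul_apply,
    Fin.sum_univ_two, Int.cast_add, Int.cast_mul]
  generalize (g 0 0 : ZMod 2) = a at *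
  generalize (g 0 1 : ZMod 2) = b at *
  generalize (g 1 0 : ZMod 2) = c at *
  generalize (g 1 1 : ZMod 2) = d at *
  generalize (h 0 0 : ZMod 2) = a' at *
  generalize (h 0 1 : ZMod 2) = b' at *
  generalize (h 1 0 : ZMod 2) = c' at *
  generalize (h 1 1 : ZMod 2) = d' at *
  obtain ⟨x, y⟩ := p
  revert a b c d a' b' c' d' x y
  decide

lemma thetaCharAction_of_mem_Gamma_two {γ : SL(2, ℤ)} (hγ : γ ∈ Γ(2))
    (p : ZMod 2 × ZMod 2) : thetaCharAction γ p = p := by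
  obtain ⟨ha, hb, hc, hd⟩ := Gamma_mem.mp hγ
  simp [thetaCharAction, ha, hb, hc, hd]

def thetaRatioMod2 (p : ZMod 2 × ZMod 2) (τ : ℍ) (z : ℂ) : ℂ :=
  thetaRatio p.1.val p.2.val τ z

lemma thetaRatioMod2_intCast (x y : ℤ) (τ : ℍ) (z : ℂ) :
    thetaRatioMod2 (x, y) τ z = thetaRatio x y τ z := by
  refine thetaRatio_congr ?_ ?_ τ z <;>
    · rw [ZMod.val_intCast]; exact Int.mod_modEq _ 2

lemma jacobiSlash_T_thetaRatioMod2 (p : ZMod 2 × ZMod 2) :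
    jacobiSlash T (thetaRatioMod2 p) = thetaRatioMod2 (thetaCharAction T p) := by
  ext τ z
  obtain ⟨x, y⟩ := p
  obtain ⟨x, rfl⟩ := ZMod.intCast_surjective x
  obtain ⟨y, rfl⟩ := ZMod.intCast_surjective y
  have hT : thetaCharAction T (x, y) = (((x : ℤ) : ZMod 2), ((x + y + 1 : ℤ) : ZMod 2)) := by
    simp [thetaCharAction, T]
  rw [jacobiSlash, hT, thetaRatioMod2_intCast, thetaRatioMod2_intCast, coe_SL2Z_smul, denom_apply]
  simpa [T] using thetaRatio_add_one x y τ z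

lemma jacobiSlash_S_thetaRatioMod2 (p : ZMod 2 × ZMod 2) :
    jacobiSlash S (thetaRatioMod2 p) = thetaRatioMod2 (thetaCharAction S p) := by
  ext τ z
  obtain ⟨x, y⟩ := p
  obtain ⟨x, rfl⟩ := ZMod.intCast_surjective x
  obtain ⟨y, rfl⟩ := ZMod.intCast_surjective y
  have hS : thetaCharAction S (x, y) = (((y : ℤ) : ZMod 2), ((-x : ℤ) : ZMod 2)) := by
    simp [thetaCharAction, S]
  rw [jacobiSlash, hS, thetaRatioMod2_intCast, thetaRatioMod2_intCast, coe_SL2Z_smul, denom_apply]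
  simpa [S] using thetaRatio_neg_one_div τ.ne_zero x y z

theorem jacobiSlash_thetaRatioMod2 (γ : SL(2, ℤ)) (p : ZMod 2 × ZMod 2) :
    jacobiSlash γ (thetaRatioMod2 p) = thetaRatioMod2 (thetaCharAction γ p) := by
  have hγ : γ ∈ Subgroup.closure {S, T} := by simp [SpecialLinearGroup.SL2Z_generators]
  induction hγ using Subgroup.closure_induction generalizing p with
  | one => simp
  | mem g hg =>
    rcases hg with rfl | rfl
    exacts [jacobiSlash_S_thetaRatioMod2 p, jacobiSlash_T_thetaRatioMod2 p]
  | mul g h _ _ hg hh => rw [jacobiSlash_mul, hg, hh, thetaCharAction_mul]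
  | inv g _ hg =>
    calc jacobiSlash g⁻¹ (thetaRatioMod2 p)
        = jacobiSlash g⁻¹ (thetaRatioMod2 (thetaCharAction g (thetaCharAction g⁻¹ p))) := by
          rw [← thetaCharAction_mul, inv_mul_cancel, thetaCharAction_one]
      _ = thetaRatioMod2 (thetaCharAction g⁻¹ p) := by
          rw [← hg, ← jacobiSlash_mul, mul_inv_cancel, jacobiSlash_one]

theorem jacobiSlash_thetaRatioMod2_of_mem_Gamma_two {γ : SL(2, ℤ)} (hγ : γ ∈ Γ(2))
    (p : ZMod 2 × ZMod 2) : jacobiSlash γ (thetaRatioMod2 p) = thetaRatioMod2 p := by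
  rw [jacobiSlash_thetaRatioMod2, thetaCharAction_of_mem_Gamma_two hγ]

/-- For `i ∈ {2,3,4}` the theta quotients `ϑᵢ(τ,z)²/ϑᵢ(τ,0)²` satisfy the modular
transformation law of a Jacobi form of weight 0 and index 1 for the principal congruence
subgroup `Γ(2)`. -/
theorem theta_quotient_modular_Gamma2 :
    ∀ th ∈ ({th2, th3, th4} : Set (ℂ → ℂ → ℂ)),
      ∀ a b c d : ℤ, a * d - b * c = 1 →
        Odd a → Odd d → Even b → Even c →
        ∀ τ z : ℂ, 0 < τ.im →
          th (((a : ℂ) * τ + b) / ((c : ℂ) * τ + d)) (z / ((c : ℂ) * τ + d)) ^ 2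
              / th (((a : ℂ) * τ + b) / ((c : ℂ) * τ + d)) 0 ^ 2
              * Complex.exp (-twoPiI * (c : ℂ) * z ^ 2 / ((c : ℂ) * τ + d))
            = th τ z ^ 2 / th τ 0 ^ 2 := by
  intro th hth a b c d hdet ha hd hb hc τ z hτ
  obtain ⟨x, y, hxy⟩ : ∃ x y : ℤ, th = thetaChar x y := by
    rcases hth with rfl | rfl | rfl
    exacts [⟨1, 0, funext₂ th2_eq_thetaChar⟩, ⟨0, 0, funext₂ th3_eq_thetaChar⟩,
      ⟨0, 1, funext₂ th4_eq_thetaChar⟩]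
  let γ : SL(2, ℤ) := ⟨!![a, b; c, d], by rwa [Matrix.det_fin_two_of]⟩
  have hγ : γ ∈ Γ(2) := Gamma_mem.mpr
    ⟨ha.intCast_zmod_two, hb.intCast_zmod_two, hc.intCast_zmod_two, hd.intCast_zmod_two⟩
  have := congrFun₂ (jacobiSlash_thetaRatioMod2_of_mem_Gamma_two hγ (x, y)) ⟨τ, hτ⟩ z
  rw [jacobiSlash, thetaRatioMod2_intCast, thetaRatioMod2_intCast, coe_SL2Z_smul,
    denom_apply] at this
  simpa [γ, hxy, thetaRatio] using this
end
end

section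
/- For all τ in the complex upper half-plane ℍ, one has Λ_4(τ) = 4·Λ_2(2τ) + 2·Λ_2(τ) and Λ_4(τ + 1/2) = 8·Λ_2(2τ) − 2·Λ_2(τ). -/
/-!
The first identity is linear algebra in `E₂(τ), E₂(2τ), E₂(4τ)`. For the second, `τ ↦ τ + 1/2`
sends `q` to `-q` and fixes `E₂(4τ)`, so it amounts to `E₂(τ + 1/2) + E₂(τ) = 6 E₂(2τ) - 4 E₂(4τ)`,
i.e. `S(-q) + S(q) = 6 S(q²) - 4 S(q⁴)` for `S(x) = ∑ σ₁(n) xⁿ`. On the left the odd terms cancel,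
so this is the coefficient identity `σ₁(2k) + e(k) = 3 σ₁(k)`, where `e(k)` is the sum of the even
divisors of `k` (so `e(2j) = 2 σ₁(j)` and `e` vanishes at odd arguments): the odd divisors of `2k`
are those of `k`, and the even ones are twice the divisors of `k`.
-/

noncomputable section

open Complex

open ArithmeticFunction
open scoped ArithmeticFunction.sigma

def evenDivisorSum (n : ℕ) : ℕ := ∑ d ∈ n.divisors with Even d, d

lemma evenDivisorSum_two_mul (k : ℕ) : evenDivisorSum (2 * k) = 2 * σ 1 k := by
  have hdiv : (2 * k).divisors.filter Even = k.divisors.image (2 * ·) := by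
    ext d
    simp only [Finset.mem_filter, Finset.mem_image, Nat.mem_divisors]
    constructor
    · rintro ⟨⟨hd, hk⟩, e, rfl⟩
      refine ⟨e, ⟨?_, by omega⟩, by omega⟩
      exact (Nat.mul_dvd_mul_iff_left two_pos).1 (by rwa [two_mul])
    · rintro ⟨e, ⟨he, hk⟩, rfl⟩
      exact ⟨⟨Nat.mul_dvd_mul_left 2 he, by omega⟩, even_two_mul e⟩
  rw [evenDivisorSum, hdiv, Finset.sum_image (fun a _ b _ h => by omega), sigma_one_apply,
    Finset.mul_sum]

lemma evenDivisorSum_of_odd {n : ℕ} (hn : Odd n) : evenDivisorSum n = 0 :=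
  Finset.sum_eq_zero fun d hd => by
    obtain ⟨hdn, hd⟩ := Finset.mem_filter.1 hd
    exact absurd (hn.of_dvd_nat (Nat.dvd_of_mem_divisors hdn)) (Nat.not_odd_iff_even.2 hd)

lemma filter_not_even_divisors_two_mul (k : ℕ) :
    (2 * k).divisors.filter (¬Even ·) = k.divisors.filter (¬Even ·) := by
  ext d
  simp only [Finset.mem_filter, Nat.mem_divisors, Nat.not_even_iff_odd, and_congr_left_iff]
  intro hd
  rw [hd.coprime_two_right.dvd_mul_left]
  omega

lemma sigma_one_two_mul_add_evenDivisorSum (k : ℕ) :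
    σ 1 (2 * k) + evenDivisorSum k = 3 * σ 1 k := by
  have h2k := Finset.sum_filter_add_sum_filter_not (2 * k).divisors Even id
  have hk := Finset.sum_filter_add_sum_filter_not k.divisors Even id
  rw [filter_not_even_divisors_two_mul] at h2k
  simp only [id, ← evenDivisorSum.eq_1, ← sigma_one_apply, evenDivisorSum_two_mul] at h2k hk
  omega

lemma summable_sigma_mul_pow (k : ℕ) {x : ℂ} (hx : ‖x‖ < 1) :
    Summable fun n : ℕ => (σ k n : ℂ) * x ^ n :=
  .of_norm_bounded (summable_norm_pow_mul_geometric_of_norm_lt_one (k + 1) hx) fun n => by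
    simp only [norm_mul, Complex.norm_natCast, norm_pow]
    gcongr
    exact_mod_cast sigma_le_pow_succ k n

lemma odd_of_notMem_range_two_mul {n : ℕ} (hn : n ∉ Set.range (2 * · : ℕ → ℕ)) : Odd n :=
  Nat.not_even_iff_odd.1 fun ⟨r, hr⟩ => hn ⟨r, by simp only; omega⟩

def sigmaSeries (x : ℂ) : ℂ := ∑' n : ℕ, (σ 1 n : ℂ) * x ^ n

lemma hasSum_sigmaSeries {x : ℂ} (hx : ‖x‖ < 1) :
    HasSum (fun n : ℕ => (σ 1 n : ℂ) * x ^ n) (sigmaSeries x) :=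
  (summable_sigma_mul_pow 1 hx).hasSum

lemma sigmaSeries_neg_add_sigmaSeries {x : ℂ} (hx : ‖x‖ < 1) :
    sigmaSeries (-x) + sigmaSeries x = 6 * sigmaSeries (x ^ 2) - 4 * sigmaSeries (x ^ 4) := by
  have hpow : ∀ n ≠ 0, ‖x ^ n‖ < 1 := fun n hn => by
    rw [norm_pow]; exact pow_lt_one₀ (norm_nonneg x) hx hn
  have hinj : Function.Injective (2 * · : ℕ → ℕ) := mul_right_injective₀ two_ne_zero
  have hlhs : HasSum (fun k : ℕ => 2 * ((σ 1 (2 * k) : ℂ) * (x ^ 2) ^ k))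
      (sigmaSeries (-x) + sigmaSeries x) := by
    refine (hinj.hasSum_iff fun n hn => ?_).2
      ((hasSum_sigmaSeries (by rwa [norm_neg])).add (hasSum_sigmaSeries hx)) |>.congr_fun ?_
    · simp [(odd_of_notMem_range_two_mul hn).neg_pow]
    · intro k
      simp only [Function.comp, (even_two_mul k).neg_pow, pow_mul]
      ring
  have heven : HasSum (fun k : ℕ => (evenDivisorSum k : ℂ) * (x ^ 2) ^ k)
      (2 * sigmaSeries (x ^ 4)) := by
    refine (hinj.hasSum_iff fun n hn => ?_).1
      (((hasSum_sigmaSeries (hpow 4 four_ne_zero)).mul_left 2).congr_fun ?_)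
    · simp [evenDivisorSum_of_odd (odd_of_notMem_range_two_mul hn)]
    · intro j
      simp only [Function.comp, evenDivisorSum_two_mul, ← pow_mul]
      push_cast
      ring
  have hsigma (k : ℕ) : (σ 1 (2 * k) : ℂ) = 3 * σ 1 k - evenDivisorSum k := by
    rw [eq_sub_iff_add_eq]
    exact_mod_cast sigma_one_two_mul_add_evenDivisorSum k
  have hrhs : HasSum (fun k : ℕ => 2 * ((σ 1 (2 * k) : ℂ) * (x ^ 2) ^ k))
      (2 * (3 * sigmaSeries (x ^ 2) - 2 * sigmaSeries (x ^ 4))) :=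
    ((((hasSum_sigmaSeries (hpow 2 two_ne_zero)).mul_left 3).sub heven).mul_left 2).congr_fun
      fun k => by rw [hsigma]; ring
  linear_combination hlhs.unique hrhs

lemma norm_qq_lt_one {τ : ℂ} (hτ : 0 < τ.im) : ‖qq τ‖ < 1 := by
  rw [qq, Complex.norm_exp, Real.exp_lt_one_iff]
  have hre : (twoPiI * τ).re = -(2 * Real.pi * τ.im) := by
    simp [twoPiI, Complex.mul_re, Complex.mul_im]
  rw [hre, neg_lt_zero]
  positivity

lemma qq_natCast_mul (n : ℕ) (τ : ℂ) : qq (n * τ) = qq τ ^ n := by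
  rw [qq, qq, ← Complex.exp_nat_mul]
  ring_nf

lemma qq_add_half (τ : ℂ) : qq (τ + 1 / 2) = -qq τ := by
  rw [qq, qq, show twoPiI * (τ + 1 / 2) = twoPiI * τ + Real.pi * I by rw [twoPiI]; ring,
    Complex.exp_add, Complex.exp_pi_mul_I, mul_neg_one]

lemma E2_eq_one_sub_sigmaSeries (τ : ℂ) : E2 τ = 1 - 24 * sigmaSeries (qq τ) := by
  have hshift : ∑' n : ℕ, (σ 1 (n + 1) : ℂ) * qq τ ^ (n + 1) = sigmaSeries (qq τ) :=
    Nat.succ_injective.tsum_eq (f := fun n : ℕ => (σ 1 n : ℂ) * qq τ ^ n) fun n hn =>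
      ⟨n - 1, Nat.succ_pred_eq_of_ne_zero (by rintro rfl; simp at hn)⟩
  simp only [E2, ← hshift, sigma_one_apply, Nat.cast_sum]

lemma Lam_eq_sigmaSeries (N : ℕ) (τ : ℂ) :
    Lam N τ = N / 24 * (N - 1) - N * (N * sigmaSeries (qq τ ^ N) - sigmaSeries (qq τ)) := by
  rw [Lam, E2_eq_one_sub_sigmaSeries, E2_eq_one_sub_sigmaSeries, qq_natCast_mul]
  ring

/-- `Λ₄(τ) = 4Λ₂(2τ) + 2Λ₂(τ)` and `Λ₄(τ + 1/2) = 8Λ₂(2τ) − 2Λ₂(τ)`. -/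
theorem Lam4_identities :
    ∀ τ : ℂ, 0 < τ.im →
      Lam 4 τ = 4 * Lam 2 (2 * τ) + 2 * Lam 2 τ ∧
      Lam 4 (τ + 1 / 2) = 8 * Lam 2 (2 * τ) - 2 * Lam 2 τ := by
  intro τ hτ
  have hq2 : qq (2 * τ) = qq τ ^ 2 := by exact_mod_cast qq_natCast_mul 2 τ
  simp only [Lam_eq_sigmaSeries, hq2, qq_add_half, ← pow_mul, (by decide : Even 4).neg_pow]
  push_cast
  refine ⟨by ring, ?_⟩
  linear_combination 4 * sigmaSeries_neg_add_sigmaSeries (norm_qq_lt_one hτ)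
end
end
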